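/- The following are equivalent: (a) there exist R > 0 and C₁ > 0 such that ∫_r^∞ (φ^{-1}(W(t)^{-2}))^{-1/2} dt ≤ C₁·r·(φ^{-1}(W(r)^{-2}))^{-1/2} for all r ≥ R; (b) there exist ε₀ > 0 and C₂ > 0 such that ∫₀^ε ψ(Φ(t)) dt ≤ C₂·ε·ψ(Φ(ε)) for all ε ∈ (0, ε₀]. -/

import Mathlib

open MeasureTheory Set Filter Topology

noncomputable section

/-- `F(t) = ∫₀ᵗ f(s) ds`. -/
noncomputable def Fint (f : ℝ → ℝ) (t : ℝ) : ℝ := ∫ s in (0:ℝ)..t, f s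

/-- `W(t) = ∫ₜ^∞ F(s)^{-1/2} ds`. -/
noncomputable def Wfun (f : ℝ → ℝ) (t : ℝ) : ℝ := ∫ s in Set.Ioi t, (Fint f s) ^ (-(1:ℝ)/2)

/-- `Φ(t) = φ(t^{-2})^{-1/2}`. -/
noncomputable def PhiFun (φ : ℝ → ℝ) (t : ℝ) : ℝ := (φ (t ^ (-(2:ℝ)))) ^ (-(1:ℝ)/2)

/-- The Keller–Osserman kernel `t ↦ (φ^{-1}(W(t)^{-2}))^{-1/2}`. -/
noncomputable def KOker (φinv f : ℝ → ℝ) (t : ℝ) : ℝ :=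
  (φinv ((Wfun f t) ^ (-(2:ℝ)))) ^ (-(1:ℝ)/2)

lemma rpow_aux1 {x : ℝ} (hx : 0 < x) : (x ^ (-(1:ℝ)/2)) ^ (-(2:ℝ)) = x := by
  rw [← Real.rpow_mul hx.le]
  norm_num

lemma rpow_aux2 {x : ℝ} (hx : 0 < x) : (x ^ (-(2:ℝ))) ^ (-(1:ℝ)/2) = x := by
  rw [← Real.rpow_mul hx.le]
  norm_num

/-- Master layer-cake identity for a pair of mutually inverse decreasing bijections of
`(0,∞)`. -/
lemma inv_pair_master (g h : ℝ → ℝ)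
    (hg : StrictAntiOn g (Set.Ioi 0))
    (hgpos : ∀ t > (0:ℝ), 0 < g t)
    (hhpos : ∀ s > (0:ℝ), 0 < h s)
    (hgh : ∀ s > (0:ℝ), g (h s) = s)
    (hhg : ∀ t > (0:ℝ), h (g t) = t)
    {r : ℝ} (hr : 0 < r) :
    ∫⁻ s in Set.Ioc 0 (g r), ENNReal.ofReal (h s)
      = (∫⁻ t in Set.Ioi r, ENNReal.ofReal (g t))
        + ENNReal.ofReal r * ENNReal.ofReal (g r) := by
  -- h is strictly antitone on (0,∞)
  have hh : StrictAntiOn h (Set.Ioi 0) := by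
    intro a ha b hb hab
    by_contra hle
    push_neg at hle
    rcases eq_or_lt_of_le hle with heq | hlt
    · have : g (h a) = g (h b) := by rw [heq]
      rw [hgh a ha, hgh b hb] at this
      exact absurd this (ne_of_lt hab)
    · have := hg (mem_Ioi.mpr (hhpos a ha)) (mem_Ioi.mpr (hhpos b hb)) hlt
      rw [hgh a ha, hgh b hb] at this
      exact absurd this (not_lt.mpr hab.le)
  set ε := g r with hεdef
  have hε : 0 < ε := hgpos r hr
  have hhr : h ε = r := hhg r hr
  -- measurability of g on (r,∞)
  have hmeas : AEMeasurable g (volume.restrict (Set.Ioi r)) := by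
    have hant : Antitone (fun t => g (max t r)) := by
      intro a b hab
      exact hg.antitoneOn (mem_Ioi.mpr (lt_of_lt_of_le hr (le_max_right a r)))
        (mem_Ioi.mpr (lt_of_lt_of_le hr (le_max_right b r)))
        (max_le_max hab le_rfl)
    refine (hant.measurable.aemeasurable).congr ?_
    filter_upwards [ae_restrict_mem measurableSet_Ioi] with t ht
    simp only [max_eq_left (le_of_lt (mem_Ioi.mp ht))]
  have hnn : 0 ≤ᵐ[volume.restrict (Set.Ioi r)] g := by
    filter_upwards [ae_restrict_mem measurableSet_Ioi] with t ht
    exact (hgpos t (hr.trans ht)).le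
  -- the distribution function of g on (r,∞)
  have hmeaskey : ∀ s ∈ Set.Ioi (0:ℝ),
      (volume.restrict (Set.Ioi r)) {t | s < g t}
        = (Set.Ioo 0 ε).indicator (fun s => ENNReal.ofReal (h s - r)) s := by
    intro s hs
    rw [Measure.restrict_apply' measurableSet_Ioi]
    rcases lt_or_ge s ε with hsε | hsε
    · have hset : {t | s < g t} ∩ Set.Ioi r = Set.Ioo r (h s) := by
        ext t
        simp only [mem_inter_iff, mem_setOf_eq, mem_Ioi, mem_Ioo]
        constructor
        · rintro ⟨hst, hrt⟩
          refine ⟨hrt, ?_⟩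
          have ht0 : 0 < t := hr.trans hrt
          have := hh (mem_Ioi.mpr hs) (mem_Ioi.mpr (hgpos t ht0)) hst
          rwa [hhg t ht0] at this
        · rintro ⟨hrt, hth⟩
          have ht0 : 0 < t := hr.trans hrt
          refine ⟨?_, hrt⟩
          have := hg (mem_Ioi.mpr ht0) (mem_Ioi.mpr (hhpos s hs)) hth
          rwa [hgh s hs] at this
      rw [hset, Real.volume_Ioo,
        Set.indicator_of_mem (show s ∈ Set.Ioo 0 ε from ⟨hs, hsε⟩)]
    · have hset : {t | s < g t} ∩ Set.Ioi r = ∅ := by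
        ext t
        simp only [mem_inter_iff, mem_setOf_eq, mem_Ioi, mem_empty_iff_false, iff_false,
          not_and]
        intro hst hrt
        have ht0 : 0 < t := hr.trans hrt
        have hlt : g t < g r := hg (mem_Ioi.mpr hr) (mem_Ioi.mpr ht0) hrt
        exact absurd hst (not_lt.mpr ((hlt.le.trans hsε)))
      rw [hset, measure_empty,
        Set.indicator_of_notMem (fun hmem => absurd hmem.2 (not_lt.mpr hsε))]
  -- layer-cake for g
  have hlayer : (∫⁻ t in Set.Ioi r, ENNReal.ofReal (g t))
      = ∫⁻ s in Set.Ioo 0 ε, ENNReal.ofReal (h s - r) := by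
    rw [lintegral_eq_lintegral_meas_lt _ hnn hmeas]
    rw [setLIntegral_congr_fun measurableSet_Ioi hmeaskey]
    rw [lintegral_indicator measurableSet_Ioo,
      Measure.restrict_restrict measurableSet_Ioo,
      Set.inter_eq_self_of_subset_left Set.Ioo_subset_Ioi_self]
  -- split h = (h - r) + r on (0, ε)
  have hsplit : ∫⁻ s in Set.Ioc 0 ε, ENNReal.ofReal (h s)
      = ∫⁻ s in Set.Ioo 0 ε, ENNReal.ofReal (h s) := by
    rw [Measure.restrict_congr_set Ioo_ae_eq_Ioc]
  rw [hsplit]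
  have hsplit2 : ∫⁻ s in Set.Ioo 0 ε, ENNReal.ofReal (h s)
      = ∫⁻ s in Set.Ioo 0 ε, (ENNReal.ofReal (h s - r) + ENNReal.ofReal r) := by
    refine setLIntegral_congr_fun measurableSet_Ioo (fun s hsm => ?_)
    have hsr : r < h s := by
      have := hh (mem_Ioi.mpr hsm.1) (mem_Ioi.mpr hε) hsm.2
      rwa [hhr] at this
    rw [← ENNReal.ofReal_add (by linarith) hr.le, sub_add_cancel]
  rw [hsplit2, lintegral_add_right _ measurable_const, setLIntegral_const,
    Real.volume_Ioo, sub_zero, hlayer, mul_comm (ENNReal.ofReal r)]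

/-- Abstract equivalence for a pair of mutually inverse decreasing bijections of `(0,∞)`. -/
lemma inv_pair_iff (g h : ℝ → ℝ)
    (hg : StrictAntiOn g (Set.Ioi 0))
    (hgpos : ∀ t > (0:ℝ), 0 < g t)
    (hhpos : ∀ s > (0:ℝ), 0 < h s)
    (hgh : ∀ s > (0:ℝ), g (h s) = s)
    (hhg : ∀ t > (0:ℝ), h (g t) = t) :
    (∃ R > (0:ℝ), ∃ C₁ > (0:ℝ), ∀ r ≥ R,
        (∫⁻ t in Set.Ioi r, ENNReal.ofReal (g t)) ≤ ENNReal.ofReal (C₁ * r * g r)) ↔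
    (∃ ε₀ > (0:ℝ), ∃ C₂ > (0:ℝ), ∀ ε ∈ Set.Ioc (0:ℝ) ε₀,
        (∫⁻ t in Set.Ioc (0:ℝ) ε, ENNReal.ofReal (h t)) ≤ ENNReal.ofReal (C₂ * ε * h ε)) := by
  have hh : StrictAntiOn h (Set.Ioi 0) := by
    intro a ha b hb hab
    by_contra hle
    push_neg at hle
    rcases eq_or_lt_of_le hle with heq | hlt
    · have : g (h a) = g (h b) := by rw [heq]
      rw [hgh a ha, hgh b hb] at this
      exact absurd this (ne_of_lt hab)
    · have := hg (mem_Ioi.mpr (hhpos a ha)) (mem_Ioi.mpr (hhpos b hb)) hlt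
      rw [hgh a ha, hgh b hb] at this
      exact absurd this (not_lt.mpr hab.le)
  constructor
  · rintro ⟨R, hR, C₁, hC₁, hbound⟩
    refine ⟨g R, hgpos R hR, C₁ + 1, by linarith, ?_⟩
    rintro ε ⟨hε0, hεle⟩
    set r := h ε with hrdef
    have hrpos : 0 < r := hhpos ε hε0
    have hrR : R ≤ r := by
      have := hh.antitoneOn (mem_Ioi.mpr hε0) (mem_Ioi.mpr (hgpos R hR)) hεle
      rwa [hhg R hR] at this
    have hgr : g r = ε := hgh ε hε0
    have hmaster := inv_pair_master g h hg hgpos hhpos hgh hhg hrpos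
    rw [hgr] at hmaster
    rw [hmaster]
    have hb := hbound r hrR
    rw [hgr] at hb
    calc (∫⁻ t in Set.Ioi r, ENNReal.ofReal (g t)) + ENNReal.ofReal r * ENNReal.ofReal ε
        ≤ ENNReal.ofReal (C₁ * r * ε) + ENNReal.ofReal r * ENNReal.ofReal ε :=
          add_le_add_left hb _
      _ = ENNReal.ofReal (C₁ * r * ε) + ENNReal.ofReal (r * ε) := by
          rw [ENNReal.ofReal_mul hrpos.le]
      _ = ENNReal.ofReal (C₁ * r * ε + r * ε) := by
          rw [ENNReal.ofReal_add (by positivity) (by positivity)]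
      _ = ENNReal.ofReal ((C₁ + 1) * ε * h ε) := by
          rw [← hrdef]; congr 1; ring
  · rintro ⟨ε₀, hε₀, C₂, hC₂, hbound⟩
    refine ⟨h ε₀, hhpos ε₀ hε₀, C₂, hC₂, ?_⟩
    intro r hrR
    have hr : 0 < r := lt_of_lt_of_le (hhpos ε₀ hε₀) hrR
    set ε := g r with hεdef
    have hε : 0 < ε := hgpos r hr
    have hεle : ε ≤ ε₀ := by
      have := hg.antitoneOn (mem_Ioi.mpr (hhpos ε₀ hε₀)) (mem_Ioi.mpr hr) hrR
      rwa [hgh ε₀ hε₀] at this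
    have hhε : h ε = r := hhg r hr
    have hb := hbound ε ⟨hε, hεle⟩
    rw [hhε] at hb
    have hmaster := inv_pair_master g h hg hgpos hhpos hgh hhg hr
    calc (∫⁻ t in Set.Ioi r, ENNReal.ofReal (g t))
        ≤ (∫⁻ t in Set.Ioi r, ENNReal.ofReal (g t))
            + ENNReal.ofReal r * ENNReal.ofReal ε := le_self_add
      _ = ∫⁻ s in Set.Ioc 0 ε, ENNReal.ofReal (h s) := hmaster.symm
      _ ≤ ENNReal.ofReal (C₂ * ε * r) := hb
      _ = ENNReal.ofReal (C₂ * r * g r) := by rw [← hεdef]; congr 1; ring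

/-- Equivalence of the refined Keller–Osserman condition at infinity with the boundary
integral condition `∫₀^ε ψ(Φ(t)) dt ≤ C₂·ε·ψ(Φ(ε))`. -/
theorem refined_keller_osserman_equivalence
    (m M : ℝ) (hm : 0 < m) (hmM : m ≤ M)
    (f : ℝ → ℝ) (hf0 : f 0 = 0) (hfnn : ∀ t, 0 ≤ f t) (hfpos : ∀ t > 0, 0 < f t)
    (hfC1 : ContDiff ℝ 1 f) (hfmono : Monotone f)
    (hfscal : ∀ t > 0, (1 + m) * f t ≤ t * deriv f t ∧ t * deriv f t ≤ (1 + M) * f t)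
    (hWfin : ∀ t > 0, IntegrableOn (fun s => (Fint f s) ^ (-(1:ℝ)/2)) (Set.Ioi t))
    (ψ : ℝ → ℝ) (hψpos : ∀ t > 0, 0 < ψ t)
    (hψW : ∀ t > 0, ψ (Wfun f t) = t) (hWψ : ∀ t > 0, Wfun f (ψ t) = t)
    (c₀ : ℝ) (hc₀ : 1 ≤ c₀)
    (φ : ℝ → ℝ) (hφpos : ∀ t > 0, 0 < φ t) (hφmono : StrictMonoOn φ (Set.Ioi 0))
    (hφC1 : ContDiffOn ℝ 1 φ (Set.Ioi 0))
    (hφderiv : ∀ t > 0, c₀⁻¹ * (φ t / t) ≤ deriv φ t ∧ deriv φ t ≤ c₀ * (φ t / t))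
    (φinv : ℝ → ℝ) (hφinvpos : ∀ t > 0, 0 < φinv t)
    (hφinv₁ : ∀ t > 0, φinv (φ t) = t) (hφinv₂ : ∀ t > 0, φ (φinv t) = t) :
    (∃ R > (0:ℝ), ∃ C₁ > (0:ℝ), ∀ r ≥ R,
        (∫⁻ t in Set.Ioi r, ENNReal.ofReal (KOker φinv f t))
          ≤ ENNReal.ofReal (C₁ * r * KOker φinv f r)) ↔
    (∃ ε₀ > (0:ℝ), ∃ C₂ > (0:ℝ), ∀ ε ∈ Set.Ioc (0:ℝ) ε₀,
        (∫⁻ t in Set.Ioc (0:ℝ) ε, ENNReal.ofReal (ψ (PhiFun φ t)))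
          ≤ ENNReal.ofReal (C₂ * ε * ψ (PhiFun φ ε))) := by
  -- the integrand of W
  set k : ℝ → ℝ := fun s => (Fint f s) ^ (-(1:ℝ)/2) with hkdef
  have hfc : Continuous f := hfC1.continuous
  have hFpos : ∀ s > (0:ℝ), 0 < Fint f s := by
    intro s hs
    exact intervalIntegral.intervalIntegral_pos_of_pos_on
      (hfc.intervalIntegrable 0 s) (fun x hx => hfpos x hx.1) hs
  have hkpos : ∀ s > (0:ℝ), 0 < k s := fun s hs => Real.rpow_pos_of_pos (hFpos s hs) _
  have hIocint : ∀ a b : ℝ, 0 < a → IntegrableOn k (Set.Ioc a b) := fun a b ha =>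
    (hWfin a ha).mono_set Set.Ioc_subset_Ioi_self
  have hIocpos : ∀ a b : ℝ, 0 < a → a < b → 0 < ∫ s in Set.Ioc a b, k s := by
    intro a b ha hab
    have hint : IntervalIntegrable k volume a b := by
      constructor
      · exact hIocint a b ha
      · rw [Set.Ioc_eq_empty (not_lt.mpr hab.le)]
        exact integrableOn_empty
    have := intervalIntegral.intervalIntegral_pos_of_pos_on hint
      (fun x hx => hkpos x (ha.trans hx.1)) hab
    rwa [intervalIntegral.integral_of_le hab.le] at this
  have hWpos : ∀ t > (0:ℝ), 0 < Wfun f t := by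
    intro t ht
    have h1 : 0 < ∫ s in Set.Ioc t (t + 1), k s := hIocpos t (t + 1) ht (by linarith)
    have h2 : (∫ s in Set.Ioc t (t + 1), k s) ≤ ∫ s in Set.Ioi t, k s := by
      refine setIntegral_mono_set (hWfin t ht) ?_ ?_
      · filter_upwards [ae_restrict_mem measurableSet_Ioi] with s hs
        exact (hkpos s (ht.trans hs)).le
      · exact HasSubset.Subset.eventuallyLE Set.Ioc_subset_Ioi_self
    exact lt_of_lt_of_le h1 h2
  have hWanti : StrictAntiOn (Wfun f) (Set.Ioi 0) := by
    intro a ha b hb hab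
    rw [mem_Ioi] at ha hb
    have hdecomp : Wfun f a = (∫ s in Set.Ioc a b, k s) + Wfun f b := by
      rw [Wfun, ← Set.Ioc_union_Ioi_eq_Ioi hab.le,
        setIntegral_union Set.Ioc_disjoint_Ioi_same measurableSet_Ioi
          (hIocint a b ha) (hWfin b hb)]
      rfl
    have := hIocpos a b ha hab
    rw [hdecomp]
    linarith
  -- monotonicity of φinv and ψ
  have hφinvmono : StrictMonoOn φinv (Set.Ioi 0) := by
    intro a ha b hb hab
    rw [mem_Ioi] at ha hb
    by_contra hc
    push_neg at hc
    have := hφmono.monotoneOn (mem_Ioi.mpr (hφinvpos b hb)) (mem_Ioi.mpr (hφinvpos a ha)) hc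
    rw [hφinv₂ a ha, hφinv₂ b hb] at this
    exact absurd this (not_le.mpr hab)
  have hψanti : StrictAntiOn ψ (Set.Ioi 0) := by
    intro a ha b hb hab
    rw [mem_Ioi] at ha hb
    by_contra hc
    push_neg at hc
    have := hWanti.antitoneOn (mem_Ioi.mpr (hψpos a ha)) (mem_Ioi.mpr (hψpos b hb)) hc
    rw [hWψ a ha, hWψ b hb] at this
    exact absurd this (not_le.mpr hab)
  -- Φ is strictly monotone and positive on (0,∞)
  have hΦpos : ∀ s > (0:ℝ), 0 < PhiFun φ s := by
    intro s hs
    exact Real.rpow_pos_of_pos (hφpos _ (Real.rpow_pos_of_pos hs _)) _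
  have hΦmono : StrictMonoOn (PhiFun φ) (Set.Ioi 0) := by
    intro a ha b hb hab
    rw [mem_Ioi] at ha hb
    have h1 : b ^ (-(2:ℝ)) < a ^ (-(2:ℝ)) :=
      Real.rpow_lt_rpow_of_neg ha hab (by norm_num)
    have h2 : φ (b ^ (-(2:ℝ))) < φ (a ^ (-(2:ℝ))) :=
      hφmono (mem_Ioi.mpr (Real.rpow_pos_of_pos hb _)) (mem_Ioi.mpr (Real.rpow_pos_of_pos ha _)) h1
    exact Real.rpow_lt_rpow_of_neg (hφpos _ (Real.rpow_pos_of_pos hb _)) h2 (by norm_num)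
  -- properties of g and h
  set g : ℝ → ℝ := KOker φinv f with hgdef
  set h : ℝ → ℝ := fun s => ψ (PhiFun φ s) with hhdef
  have hgpos : ∀ t > (0:ℝ), 0 < g t := by
    intro t ht
    exact Real.rpow_pos_of_pos (hφinvpos _ (Real.rpow_pos_of_pos (hWpos t ht) _)) _
  have hhpos : ∀ s > (0:ℝ), 0 < h s := fun s hs => hψpos _ (hΦpos s hs)
  have hganti : StrictAntiOn g (Set.Ioi 0) := by
    intro a ha b hb hab
    rw [mem_Ioi] at ha hb
    have hWa := hWpos a ha
    have hWb := hWpos b hb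
    have hW : Wfun f b < Wfun f a := hWanti (mem_Ioi.mpr ha) (mem_Ioi.mpr hb) hab
    have h1 : Wfun f a ^ (-(2:ℝ)) < Wfun f b ^ (-(2:ℝ)) :=
      Real.rpow_lt_rpow_of_neg hWb hW (by norm_num)
    have h2 : φinv (Wfun f a ^ (-(2:ℝ))) < φinv (Wfun f b ^ (-(2:ℝ))) :=
      hφinvmono (mem_Ioi.mpr (Real.rpow_pos_of_pos hWa _))
        (mem_Ioi.mpr (Real.rpow_pos_of_pos hWb _)) h1
    exact Real.rpow_lt_rpow_of_neg
      (hφinvpos _ (Real.rpow_pos_of_pos hWa _)) h2 (by norm_num)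
  have hhg : ∀ t > (0:ℝ), h (g t) = t := by
    intro t ht
    have hW := hWpos t ht
    have h1 : (0:ℝ) < Wfun f t ^ (-(2:ℝ)) := Real.rpow_pos_of_pos hW _
    have h2 : (0:ℝ) < φinv (Wfun f t ^ (-(2:ℝ))) := hφinvpos _ h1
    have hΦg : PhiFun φ (g t) = Wfun f t := by
      rw [hgdef, KOker, PhiFun, rpow_aux1 h2, hφinv₂ _ h1, rpow_aux2 hW]
    rw [hhdef]
    simp only
    rw [hΦg, hψW t ht]
  have hgh : ∀ s > (0:ℝ), g (h s) = s := by
    intro s hs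
    have h1 : (0:ℝ) < s ^ (-(2:ℝ)) := Real.rpow_pos_of_pos hs _
    have h2 : (0:ℝ) < φ (s ^ (-(2:ℝ))) := hφpos _ h1
    have hΦs : (0:ℝ) < PhiFun φ s := hΦpos s hs
    have hWh : Wfun f (h s) = PhiFun φ s := by
      rw [hhdef]; simp only; rw [hWψ _ hΦs]
    rw [hgdef, KOker, hWh, PhiFun, rpow_aux1 h2, hφinv₁ _ h1, rpow_aux2 hs]
  exact inv_pair_iff g h hganti hgpos hhpos hgh hhg

end
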